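/- Let G be a Halin graph with a list assignment L on its edges such that for each edge vw the list L(vw) has size at least max(deg(v), deg(w), 4). Then G has a proper edge colouring from the lists. -/

import Mathlib

/-- A proper edge colouring of `G` from the lists `L`: every edge of `G` receives a colour
from its list, and edges sharing a vertex receive distinct colours. -/
def IsListEdgeColoring {V : Type*} (G : SimpleGraph V) (L : Sym2 V → Finset ℕ)
    (C : Sym2 V → ℕ) : Prop :=
  (∀ e ∈ G.edgeSet, C e ∈ L e) ∧
  ∀ e ∈ G.edgeSet, ∀ f ∈ G.edgeSet, e ≠ f → (∃ v, v ∈ e ∧ v ∈ f) → C e ≠ C f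

/-- A subset of `ZMod n` is a cyclic interval (a set of consecutive elements). -/
def CyclicInterval (n : ℕ) (I : Set (ZMod n)) : Prop :=
  ∃ (s : ZMod n) (len : ℕ), I = {x | ∃ j : ℕ, j < len ∧ x = s + (j : ZMod n)}

/-- `G` is a Halin graph: it is the union of a tree `T` without degree-2 vertices and a
cycle `σ 0, σ 1, …, σ (n-1)` through precisely the leaves of `T`, where the cyclic order
of the leaves is compatible with a planar embedding of `T`:  for every edge `ab` of the
tree, the leaves lying in the component of `a` of `T - ab` form a set of consecutive
vertices of the cycle (this is exactly the condition for the resulting graph to be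
planar, i.e. for the cycle to pass around the tree in the natural cyclic order). -/
def IsHalin {V : Type*} (G : SimpleGraph V) : Prop :=
  ∃ (T : SimpleGraph V) (n : ℕ) (σ : ZMod n → V),
    T.IsTree ∧ T ≤ G ∧
    (∀ v : V, (T.neighborSet v).ncard ≠ 2) ∧
    3 ≤ n ∧ Function.Injective σ ∧
    Set.range σ = {v : V | (T.neighborSet v).ncard = 1} ∧
    (∀ u v : V, (G.Adj u v ∧ ¬T.Adj u v) ↔
      ∃ i : ZMod n, (u = σ i ∧ v = σ (i + 1)) ∨ (v = σ i ∧ u = σ (i + 1))) ∧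
    (∀ a b : V, T.Adj a b →
      CyclicInterval n {i : ZMod n | (T.deleteEdges {s(a, b)}).Reachable a (σ i)})

/-- A proper edge colouring of `G` with colours in `α`. -/
def IsProperEdgeColoring {V α : Type*} (G : SimpleGraph V) (C : Sym2 V → α) : Prop :=
  ∀ e ∈ G.edgeSet, ∀ f ∈ G.edgeSet, e ≠ f → (∃ v, v ∈ e ∧ v ∈ f) → C e ≠ C f


/-!
Colour the tree greedily from the lists by peeling off leaves: the list of a tree edge is at
least as long as the tree degree at either end. Each cycle edge keeps a residual list of at least
`4 - 2 = 2` colours, and a cycle is colourable from lists of size at least two unless they are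
all the same pair. In that case take two consecutive leaves `σ t`, `σ (t + 1)` with a common
neighbour `p`, which exist by planarity. The lists of the two spokes at `p` are long enough to
recolour one spoke with a colour unused at `p`, or else to swap the colours of the two spokes,
and either change breaks the pattern of equal residual lists.
-/

open Finset SimpleGraph

namespace SimpleGraph

variable {V : Type*} {F : SimpleGraph V} {a b c x y : V}

lemma adj_of_neighborSet_eq_singleton (ha : F.neighborSet a = {b}) : F.Adj a b := by
  simp [← mem_neighborSet, ha]

lemma eq_of_neighborSet_eq_singleton (ha : F.neighborSet a = {b}) (hac : F.Adj a c) : c = b := by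
  rwa [← mem_neighborSet, ha] at hac

lemma eq_of_mem_edgeSet_of_neighborSet_eq_singleton {e : Sym2 V} (ha : F.neighborSet a = {b})
    (he : e ∈ F.edgeSet) (hae : a ∈ e) : e = s(a, b) := by
  obtain ⟨w, rfl⟩ := Sym2.mem_iff_exists.1 hae
  rw [eq_of_neighborSet_eq_singleton ha (show F.Adj a w from he)]

lemma neighborSet_eq_singleton_of_ncard_eq_one (h : (F.neighborSet a).ncard = 1)
    (hab : F.Adj a b) : F.neighborSet a = {b} := by
  obtain ⟨x, hx⟩ := Set.ncard_eq_one.1 h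
  rwa [eq_of_neighborSet_eq_singleton hx hab]

lemma three_le_ncard_neighborSet [Finite V] (hdeg : ∀ v, (F.neighborSet v).ncard ≠ 2)
    (hab : F.Adj a b) (ha : (F.neighborSet a).ncard ≠ 1) : 3 ≤ (F.neighborSet a).ncard := by
  have := ((Set.ncard_pos (Set.toFinite _)).2 ⟨b, hab⟩ : 0 < (F.neighborSet a).ncard)
  have := hdeg a
  omega

def branch (F : SimpleGraph V) (a b : V) : Set V :=
  {y | (F.deleteEdges {s(a, b)}).Reachable a y}

lemma mem_branch_iff : y ∈ F.branch a b ↔ ∃ p : F.Walk a y, s(a, b) ∉ p.edges :=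
  reachable_deleteEdges_iff_exists_walk

lemma mem_branch_self : a ∈ F.branch a b := Reachable.refl a

lemma not_mem_branch (hF : F.IsAcyclic) (hab : F.Adj a b) : b ∉ F.branch a b :=
  isAcyclic_iff_forall_adj_isBridge.1 hF hab

lemma mem_branch_of_not_mem_support (p : F.Walk a y) (hb : b ∉ p.support) : y ∈ F.branch a b :=
  mem_branch_iff.2 ⟨p, fun h => hb (p.snd_mem_support_of_mem_edges h)⟩

lemma exists_isPath_of_mem_branch (hF : F.IsAcyclic) (hab : F.Adj a b) (hy : y ∈ F.branch a b) :
    ∃ p : F.Walk a y, p.IsPath ∧ b ∉ p.support := by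
  classical
  obtain ⟨p, hp⟩ := mem_branch_iff.1 hy
  refine ⟨p.bypass, p.bypass_isPath, fun hb => not_mem_branch hF hab (mem_branch_iff.2 ?_)⟩
  exact ⟨p.bypass.takeUntil b hb, fun h =>
    hp (p.edges_bypass_subset_edges (p.bypass.edges_takeUntil_subset_edges hb h))⟩

lemma branch_subset_branch (hF : F.IsAcyclic) (hab : F.Adj a b) (hbc : F.Adj b c) (hca : c ≠ a) :
    F.branch c b ⊆ F.branch b a := by
  intro y hy
  obtain ⟨p, -, hbp⟩ := exists_isPath_of_mem_branch hF hbc.symm hy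
  refine mem_branch_iff.2 ⟨Walk.cons hbc p, ?_⟩
  rw [Walk.edges_cons, List.mem_cons, not_or]
  refine ⟨fun h => ?_, fun h => hbp (p.fst_mem_support_of_mem_edges h)⟩
  rcases Sym2.eq_iff.1 h with ⟨-, h⟩ | ⟨-, h⟩
  · exact hca h.symm
  · exact hab.ne h

lemma disjoint_branch (hF : F.IsAcyclic) (hab : F.Adj a b) (hac : F.Adj a c) (hbc : b ≠ c) :
    Disjoint (F.branch b a) (F.branch c a) := by
  refine Set.disjoint_left.2 fun y hb hc => hbc ?_
  obtain ⟨p, hp, hap⟩ := exists_isPath_of_mem_branch hF hab.symm hb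
  obtain ⟨q, hq, haq⟩ := exists_isPath_of_mem_branch hF hac.symm hc
  have := (hF.subsingleton_path a y).elim ⟨_, hp.cons (h := hab) hap⟩
    ⟨_, hq.cons (h := hac) haq⟩
  simpa using congrArg (fun r : F.Path a y => (r : F.Walk a y).snd) this

lemma exists_adj_mem_branch (hF : F.IsAcyclic) (hab : F.Adj a b) (hy : y ∈ F.branch a b)
    (hya : y ≠ a) : ∃ c, F.Adj a c ∧ c ≠ b ∧ y ∈ F.branch c a := by
  obtain ⟨p, hp, hbp⟩ := exists_isPath_of_mem_branch hF hab hy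
  cases p with
  | nil => exact absurd rfl hya
  | @cons _ c _ hac q =>
    rw [Walk.cons_isPath_iff] at hp
    refine ⟨c, hac, ?_, mem_branch_of_not_mem_support q hp.2⟩
    rintro rfl
    simp at hbp

lemma branch_eq_singleton (hF : F.IsAcyclic) (ha : F.neighborSet a = {b}) :
    F.branch a b = {a} := by
  have hab := adj_of_neighborSet_eq_singleton ha
  refine Set.eq_singleton_iff_unique_mem.2
    ⟨mem_branch_self, fun y hy => by_contra fun hya => ?_⟩
  obtain ⟨c, hac, hcb, -⟩ := exists_adj_mem_branch hF hab hy hya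
  exact hcb (eq_of_neighborSet_eq_singleton ha hac)

lemma mem_branch_of_neighborSet_eq_singleton (hF : F.Connected) (hx : F.neighborSet x = {a})
    (hy : y ≠ x) : y ∈ F.branch a x := by
  obtain ⟨p, hp⟩ := (hF.preconnected x y).exists_isPath
  cases p with
  | nil => exact absurd rfl hy
  | @cons _ c _ hxc q =>
    obtain rfl := eq_of_neighborSet_eq_singleton hx hxc
    exact mem_branch_of_not_mem_support q ((Walk.cons_isPath_iff _ _).1 hp).2

lemma exists_leaf_mem_branch [Finite V] (hF : F.IsAcyclic) (hab : F.Adj a b) :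
    ∃ x ∈ F.branch a b, (F.neighborSet x).ncard = 1 := by
  induction hm : (F.branch a b).ncard using Nat.strong_induction_on generalizing a b with
  | _ m ih =>
  by_cases ha : (F.neighborSet a).ncard = 1
  · exact ⟨a, mem_branch_self, ha⟩
  obtain ⟨c, hac, hcb⟩ : ∃ c ∈ F.neighborSet a, c ≠ b := by
    by_contra! h
    exact ha (Set.ncard_eq_one.2 ⟨b, Set.eq_singleton_iff_unique_mem.2 ⟨hab, h⟩⟩)
  have hsub := branch_subset_branch hF hab.symm hac hcb
  have hlt : (F.branch c a).ncard < m := hm ▸ Set.ncard_lt_ncard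
    (hsub.ssubset_of_not_superset fun h => not_mem_branch hF hac.symm (h mem_branch_self))
    (Set.toFinite _)
  obtain ⟨x, hx, hleaf⟩ := ih _ hlt hac.symm rfl
  exact ⟨x, hsub hx, hleaf⟩

lemma exists_ne_leaves_mem_branch [Finite V] (hF : F.IsAcyclic) (hab : F.Adj a b)
    (ha : 3 ≤ (F.neighborSet a).ncard) :
    ∃ x y, x ≠ y ∧ x ∈ F.branch a b ∧ y ∈ F.branch a b ∧
      (F.neighborSet x).ncard = 1 ∧ (F.neighborSet y).ncard = 1 := by
  have h2 : 1 < (F.neighborSet a \ {b}).ncard := by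
    rw [Set.ncard_sdiff_singleton_of_mem (show b ∈ F.neighborSet a from hab)]; omega
  obtain ⟨c, d, ⟨hac, hcb⟩, ⟨had, hdb⟩, hcd⟩ :=
    (Set.one_lt_ncard_iff (Set.toFinite _)).1 h2
  obtain ⟨x, hx, hxl⟩ := exists_leaf_mem_branch hF (show F.Adj a c from hac).symm
  obtain ⟨y, hy, hyl⟩ := exists_leaf_mem_branch hF (show F.Adj a d from had).symm
  refine ⟨x, y, ?_, branch_subset_branch hF hab.symm hac hcb hx,
    branch_subset_branch hF hab.symm had hdb hy, hxl, hyl⟩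
  rintro rfl
  exact Set.disjoint_left.1 (disjoint_branch hF hac had hcd) hx hy

lemma adj_swap_iff [DecidableEq V] (h : F.neighborSet x = F.neighborSet y) :
    F.Adj (Equiv.swap x y a) (Equiv.swap x y b) ↔ F.Adj a b := by
  have hxy : ∀ w, F.Adj x w ↔ F.Adj y w := fun w => Set.ext_iff.1 h w
  simp only [Equiv.swap_apply_def]
  split_ifs <;> subst_vars <;> grind [F.adj_comm]

def swapIso [DecidableEq V] (h : F.neighborSet x = F.neighborSet y) : F ≃g F :=
  ⟨Equiv.swap x y, adj_swap_iff h⟩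

end SimpleGraph

lemma Sym2.map_swap_eq_self {α : Type*} [DecidableEq α] {u v : α} {e : Sym2 α} (hu : u ∉ e)
    (hv : v ∉ e) : e.map (Equiv.swap u v) = e := by
  induction e using Sym2.ind with | _ a b =>
  simp only [Sym2.mem_iff, not_or] at hu hv
  rw [Sym2.map_mk, Equiv.swap_apply_of_ne_of_ne (Ne.symm hu.1) (Ne.symm hv.1),
    Equiv.swap_apply_of_ne_of_ne (Ne.symm hu.2) (Ne.symm hv.2)]

lemma IsProperEdgeColoring.comp_map {V α : Type*} {G : SimpleGraph V} {C : Sym2 V → α}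
    (hC : IsProperEdgeColoring G C) (φ : G ≃g G) : IsProperEdgeColoring G (C ∘ Sym2.map φ) :=
  fun _ he _ hf hef ⟨v, hve, hvf⟩ =>
    hC _ (φ.map_mem_edgeSet_iff.2 he) _ (φ.map_mem_edgeSet_iff.2 hf)
      ((Sym2.map.injective φ.injective).ne hef)
      ⟨φ v, Sym2.mem_map.2 ⟨v, hve, rfl⟩, Sym2.mem_map.2 ⟨v, hvf, rfl⟩⟩

namespace IsListEdgeColoring

variable {V : Type*} {F H : SimpleGraph V} {L : Sym2 V → Finset ℕ} {C : Sym2 V → ℕ}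
  {p u v : V}

lemma anti (hle : H ≤ F) (hC : IsListEdgeColoring F L C) : IsListEdgeColoring H L C :=
  ⟨fun e he => hC.1 e (edgeSet_mono hle he),
    fun e he f hf => hC.2 e (edgeSet_mono hle he) f (edgeSet_mono hle hf)⟩

lemma update [DecidableEq V] {e : Sym2 V} {z : ℕ}
    (hC : IsListEdgeColoring (F.deleteEdges {e}) L C) (hz : z ∈ L e)
    (hfree : ∀ f ∈ F.edgeSet, f ≠ e → (∃ v, v ∈ e ∧ v ∈ f) → C f ≠ z) :
    IsListEdgeColoring F L (Function.update C e z) := by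
  have hdel : ∀ f ∈ F.edgeSet, f ≠ e → f ∈ (F.deleteEdges {e}).edgeSet := fun f hf hfe =>
    by simpa [edgeSet_deleteEdges] using ⟨hf, hfe⟩
  refine ⟨fun f hf => ?_, fun f hf g hg hfg hshare => ?_⟩
  · rcases eq_or_ne f e with rfl | hfe
    · simpa using hz
    · simpa [hfe] using hC.1 f (hdel f hf hfe)
  rcases eq_or_ne f e with rfl | hfe <;> rcases eq_or_ne g f with rfl | hgf
  · exact absurd rfl hfg
  · simpa [hgf] using (hfree g hg hgf hshare).symm
  · exact absurd rfl hfg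
  · rcases eq_or_ne g e with rfl | hge
    · simpa [hfe] using hfree f hf hfe (by simpa [and_comm] using hshare)
    · simpa [hfe, hge] using hC.2 f (hdel f hf hfe) g (hdel g hg hge) hfg hshare

lemma update_pendant [DecidableEq V] {z : ℕ}
    (hC : IsListEdgeColoring (F.deleteEdges {s(p, u)}) L C) (hu : F.neighborSet u = {p})
    (hz : z ∈ L s(p, u)) (hfree : ∀ w, F.Adj p w → w ≠ u → C s(p, w) ≠ z) :
    IsListEdgeColoring F L (Function.update C s(p, u) z) := by
  refine hC.update hz fun f hf hfe ⟨v, hve, hvf⟩ => ?_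
  rcases Sym2.mem_iff.1 hve with rfl | rfl
  · obtain ⟨w, rfl⟩ := Sym2.mem_iff_exists.1 hvf
    exact hfree w hf (by rintro rfl; exact hfe rfl)
  · rw [eq_of_mem_edgeSet_of_neighborSet_eq_singleton hu hf hvf, Sym2.eq_swap] at hfe
    exact absurd rfl hfe

lemma exists_ne_of_pendant [DecidableEq V] (hC : IsListEdgeColoring F L C)
    (hu : F.neighborSet u = {p})
    (hz : ∃ z ∈ L s(p, u), z ∉ (fun w => C s(p, w)) '' F.neighborSet p) :
    ∃ C', IsListEdgeColoring F L C' ∧ (∀ e, e ≠ s(p, u) → C' e = C e) ∧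
      C' s(p, u) ≠ C s(p, u) := by
  obtain ⟨z, hzL, hzC⟩ := hz
  refine ⟨Function.update C s(p, u) z, (hC.anti (deleteEdges_le _)).update_pendant hu hzL
    fun w hw _ h => hzC ⟨w, hw, h⟩, fun e he => Function.update_of_ne he _ _, ?_⟩
  rw [Function.update_self]
  exact fun h => hzC ⟨u, (adj_of_neighborSet_eq_singleton hu).symm, h.symm⟩

lemma mem_of_coe_subset_image [Finite V] (hLu : (F.neighborSet p).ncard ≤ #(L s(p, u)))
    (hz : ∀ z ∈ L s(p, u), z ∈ (fun w => C s(p, w)) '' F.neighborSet p) {w : V}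
    (hw : F.Adj p w) :
    C s(p, w) ∈ L s(p, u) := by
  have := Set.eq_of_subset_of_ncard_le (s := (L s(p, u) : Set ℕ)) hz (by
    rw [Set.ncard_coe_finset]
    exact (Set.ncard_image_le (Set.toFinite _)).trans hLu) (Set.toFinite _)
  rw [← Finset.mem_coe, this]
  exact ⟨w, hw, rfl⟩

theorem exists_ne_of_twin_pendants [Finite V] [DecidableEq V] (hC : IsListEdgeColoring F L C)
    (hu : F.neighborSet u = {p}) (hv : F.neighborSet v = {p}) (huv : u ≠ v)
    (hLu : (F.neighborSet p).ncard ≤ #(L s(p, u)))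
    (hLv : (F.neighborSet p).ncard ≤ #(L s(p, v))) :
    ∃ C', IsListEdgeColoring F L C' ∧
      (∀ e ∈ F.edgeSet, e ≠ s(p, u) → e ≠ s(p, v) → C' e = C e) ∧
      (C' s(p, u) ≠ C s(p, u) ∨ C' s(p, v) ≠ C s(p, v)) := by
  by_cases hzu : ∃ z ∈ L s(p, u), z ∉ (fun w => C s(p, w)) '' F.neighborSet p
  · obtain ⟨C', hC', hagree, hne⟩ := hC.exists_ne_of_pendant hu hzu
    exact ⟨C', hC', fun e _ he _ => hagree e he, .inl hne⟩
  by_cases hzv : ∃ z ∈ L s(p, v), z ∉ (fun w => C s(p, w)) '' F.neighborSet p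
  · obtain ⟨C', hC', hagree, hne⟩ := hC.exists_ne_of_pendant hv hzv
    exact ⟨C', hC', fun e _ _ he => hagree e he, .inr hne⟩
  push Not at hzu hzv
  -- Both `L s(p, u)` and `L s(p, v)` are the colours at `p`, so the twins `u`, `v` trade colours.
  have hpu := adj_of_neighborSet_eq_singleton hu
  have hpv := adj_of_neighborSet_eq_singleton hv
  have hfix : ∀ e ∈ F.edgeSet, e ≠ s(p, u) → e ≠ s(p, v) →
      Sym2.map (Equiv.swap u v) e = e :=
    fun e he heu hev => Sym2.map_swap_eq_self
      (fun h => heu (by rw [eq_of_mem_edgeSet_of_neighborSet_eq_singleton hu he h, Sym2.eq_swap]))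
      (fun h => hev (by rw [eq_of_mem_edgeSet_of_neighborSet_eq_singleton hv he h, Sym2.eq_swap]))
  have hmapu : Sym2.map (Equiv.swap u v) s(p, u) = s(p, v) := by
    simp [Equiv.swap_apply_of_ne_of_ne hpu.ne' hpv.ne']
  have hmapv : Sym2.map (Equiv.swap u v) s(p, v) = s(p, u) := by
    simp [Equiv.swap_apply_of_ne_of_ne hpu.ne' hpv.ne']
  have hne : C s(p, v) ≠ C s(p, u) := hC.2 _ hpv.symm _ hpu.symm
    (fun h => huv (Sym2.congr_right.1 h).symm) ⟨p, by simp, by simp⟩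
  refine ⟨C ∘ Sym2.map (swapIso (hu.trans hv.symm)),
    ⟨fun e he => ?_, IsProperEdgeColoring.comp_map hC.2 _⟩,
    fun e he heu hev => congrArg C (hfix e he heu hev),
    .inl (by simpa [swapIso, hmapu] using hne)⟩
  simp only [swapIso, Function.comp_apply, RelIso.coe_fn_mk]
  by_cases heu : e = s(p, u)
  · rw [heu, hmapu]
    exact mem_of_coe_subset_image hLu hzu hpv.symm
  by_cases hev : e = s(p, v)
  · rw [hev, hmapv]
    exact mem_of_coe_subset_image hLv hzv hpu.symm
  rw [hfix e he heu hev]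
  exact hC.1 e he

end IsListEdgeColoring

theorem SimpleGraph.IsAcyclic.exists_isListEdgeColoring {V : Type*} [Finite V] {F : SimpleGraph V}
    (hF : F.IsAcyclic) (L : Sym2 V → Finset ℕ)
    (hL : ∀ u v, F.Adj u v → (F.neighborSet u).ncard ≤ #(L s(u, v))) :
    ∃ C, IsListEdgeColoring F L C := by
  classical
  induction hm : F.edgeSet.ncard using Nat.strong_induction_on generalizing F with
  | _ m ih =>
  rcases F.edgeSet.eq_empty_or_nonempty with hE | ⟨e, he⟩
  · exact ⟨0, by simp [IsListEdgeColoring, hE]⟩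
  induction e using Sym2.ind with | _ a b =>
  obtain ⟨x, -, hx⟩ := exists_leaf_mem_branch hF he
  obtain ⟨q, hxq⟩ := Set.ncard_eq_one.1 hx
  have hqx : F.Adj q x := (adj_of_neighborSet_eq_singleton hxq).symm
  have hlt : (F.deleteEdges {s(q, x)}).edgeSet.ncard < m := by
    rw [← hm, edgeSet_deleteEdges]
    exact Set.ncard_sdiff_singleton_lt_of_mem hqx (Set.toFinite _)
  obtain ⟨C, hC : IsListEdgeColoring _ L C⟩ := ih _ hlt (hF.anti (deleteEdges_le _))
    (fun u v huv => (Set.ncard_le_ncard (fun w hw => (deleteEdges_le _) hw) (Set.toFinite _)).trans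
      (hL u v ((deleteEdges_le _) huv))) rfl
  have hcount : ((fun w => C s(q, w)) '' (F.neighborSet q \ {x})).ncard <
      (L s(q, x) : Set ℕ).ncard :=
    calc _ ≤ (F.neighborSet q \ {x}).ncard := Set.ncard_image_le (Set.toFinite _)
      _ < (F.neighborSet q).ncard := Set.ncard_sdiff_singleton_lt_of_mem hqx (Set.toFinite _)
      _ ≤ _ := by rw [Set.ncard_coe_finset]; exact hL q x hqx
  obtain ⟨z, hz, hzC⟩ := Set.exists_mem_notMem_of_ncard_lt_ncard hcount
  exact ⟨_, hC.update_pendant hxq hz fun w hqw hwx hCw => hzC ⟨w, ⟨hqw, hwx⟩, hCw⟩⟩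

lemma ZMod.natCast_ne_zero_of_lt {n k : ℕ} (hk : 0 < k) (hkn : k < n) : (k : ZMod n) ≠ 0 := by
  rw [Ne, ZMod.natCast_eq_zero_iff]
  exact Nat.not_dvd_of_pos_of_lt hk hkn

lemma ZMod.natCast_sub_one_eq_neg_one {n : ℕ} (hn : 1 ≤ n) : ((n - 1 : ℕ) : ZMod n) = -1 := by
  rw [Nat.cast_sub hn, ZMod.natCast_self, Nat.cast_one, zero_sub]

lemma CyclicInterval.exists_add_one_mem {n : ℕ} {I : Set (ZMod n)} (hI : CyclicInterval n I)
    (h2 : 1 < I.ncard) : ∃ s, s ∈ I ∧ s + 1 ∈ I := by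
  obtain ⟨s, len, rfl⟩ := hI
  have hlen : 2 ≤ len := by
    by_contra! hlen
    have : {x | ∃ j : ℕ, j < len ∧ x = s + (j : ZMod n)} ⊆ {s} := by
      rintro x ⟨j, hj, rfl⟩
      obtain rfl : j = 0 := by omega
      simp
    exact absurd ((Set.ncard_le_ncard this).trans (Set.ncard_singleton s).le) (by omega)
  exact ⟨s, ⟨0, by omega, by simp⟩, ⟨1, by omega, by simp⟩⟩

def CyclicListColorable {n : ℕ} (R : ZMod n → Finset ℕ) : Prop :=
  ∃ f : ZMod n → ℕ, (∀ i, f i ∈ R i) ∧ ∀ i, f i ≠ f (i + 1)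

lemma exists_seq_mem_ne (Q : ℕ → Finset ℕ) (hQ : ∀ j, 1 < #(Q (j + 1))) {γ : ℕ}
    (hγ : γ ∈ Q 0) :
    ∃ g : ℕ → ℕ, g 0 = γ ∧ (∀ j, g j ∈ Q j) ∧ ∀ j, g (j + 1) ≠ g j := by
  choose next hnext hne using fun j k => (Q (j + 1)).exists_mem_ne (hQ j) k
  refine ⟨fun j => Nat.rec γ next j, rfl, fun j => ?_, fun j => hne j _⟩
  cases j with
  | zero => exact hγ
  | succ j => exact hnext j _

/-- Colour greedily from `i + 1` around to `i`, starting with `γ`. -/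
lemma cyclicListColorable_of_one_lt_card_erase {n : ℕ} (hn : 2 ≤ n) {R : ZMod n → Finset ℕ}
    (hR : ∀ i, 1 < #(R i)) (i : ZMod n) {γ : ℕ} (hγ : γ ∈ R (i + 1))
    (hi : 1 < #((R i).erase γ)) : CyclicListColorable R := by
  have : NeZero n := ⟨by omega⟩
  set k := i + 1
  have hlast : k + ((n - 1 : ℕ) : ZMod n) = i := by
    rw [ZMod.natCast_sub_one_eq_neg_one (by omega)]; ring
  set Q : ℕ → Finset ℕ := fun j => if j = n - 1 then (R i).erase γ else R (k + j)
  have hQR : ∀ j, Q j ⊆ R (k + j) := by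
    intro j
    by_cases hj : j = n - 1
    · simpa [Q, hj, hlast] using erase_subset γ (R i)
    · simp [Q, hj]
  obtain ⟨g, hg0, hgQ, hgne⟩ := exists_seq_mem_ne Q
    (fun j => by by_cases hj : j + 1 = n - 1 <;> simp [Q, hj, hi, hR]) (γ := γ)
    (by simpa [Q, show 0 ≠ n - 1 by omega] using hγ)
  refine ⟨fun x => g (x - k).val, fun x => ?_, fun x => ?_⟩
  · simpa [ZMod.natCast_zmod_val] using hQR _ (hgQ (x - k).val)
  have hj := ZMod.val_lt (x - k)
  by_cases hjn : (x - k).val = n - 1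
  · have hx : x + 1 - k = 0 := by
      rw [add_sub_right_comm, ← ZMod.natCast_zmod_val (x - k), hjn,
        ZMod.natCast_sub_one_eq_neg_one (by omega), neg_add_cancel]
    have := hgQ (n - 1)
    simp only [Q, if_pos rfl, mem_erase] at this
    simpa [hx, hjn, hg0] using this.1
  · have hx : x + 1 - k = (((x - k).val + 1 : ℕ) : ZMod n) := by
      push_cast; rw [ZMod.natCast_zmod_val]; ring
    show g (x - k).val ≠ g (x + 1 - k).val
    rw [hx, ZMod.val_natCast_of_lt (by omega)]
    exact (hgne _).symm

lemma exists_forall_eq_of_not_cyclicListColorable {n : ℕ} {R : ZMod n → Finset ℕ}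
    (hn : 2 ≤ n) (hR : ∀ i, 1 < #(R i)) (h : ¬ CyclicListColorable R) :
    ∃ S, #S = 2 ∧ ∀ i, R i = S := by
  have : NeZero n := ⟨by omega⟩
  have herase : ∀ i, ∀ γ ∈ R (i + 1), #((R i).erase γ) ≤ 1 := fun i γ hγ =>
    not_lt.1 fun hi => h (cyclicListColorable_of_one_lt_card_erase hn hR i hγ hi)
  have hsub : ∀ i, R (i + 1) ⊆ R i := fun i γ hγ => by_contra fun hγi => by
    have := herase i γ hγ
    rw [erase_eq_of_notMem hγi] at this
    exact absurd (hR i) (by omega)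
  have hcard : ∀ i, #(R i) = 2 := fun i => by
    obtain ⟨γ, hγ⟩ := card_pos.1 (by have := hR (i + 1); omega : 0 < #(R (i + 1)))
    have := herase i γ hγ
    have := pred_card_le_card_erase (s := R i) (a := γ)
    have := hR i
    omega
  have hstep : ∀ i, R (i + 1) = R i := fun i =>
    eq_of_subset_of_card_le (hsub i) (by rw [hcard, hcard])
  have hnat : ∀ m : ℕ, R m = R 0 := fun m => by
    induction m with
    | zero => simp
    | succ m ih => rw [Nat.cast_succ, hstep, ih]
  exact ⟨R 0, hcard 0, fun i => by rw [← ZMod.natCast_zmod_val i, hnat]⟩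

/-- `a i` stands for the colour of the tree edge at the leaf `i` of the cycle. -/
def residualList {n : ℕ} (L : ZMod n → Finset ℕ) (a : ZMod n → ℕ) (i : ZMod n) :
    Finset ℕ :=
  L i \ {a i, a (i + 1)}

section Residual

variable {n : ℕ} {L : ZMod n → Finset ℕ} {a b : ZMod n → ℕ} {i t : ZMod n} {x : ℕ}

lemma mem_residualList : x ∈ residualList L a i ↔ x ∈ L i ∧ x ≠ a i ∧ x ≠ a (i + 1) :=
  by simp [residualList]

lemma one_lt_card_residualList (hL : 4 ≤ #(L i)) : 1 < #(residualList L a i) := by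
  have := card_le_card_sdiff_add_card (s := L i) (t := {a i, a (i + 1)})
  have := card_le_two (a := a i) (b := a (i + 1))
  rw [residualList]; omega

lemma mem_and_ne_of_card_residualList_le (hL : 4 ≤ #(L i)) (hS : #(residualList L a i) ≤ 2) :
    a i ∈ L i ∧ a (i + 1) ∈ L i ∧ a i ≠ a (i + 1) := by
  rw [residualList] at hS
  have := card_sdiff_add_card_inter (L i) {a i, a (i + 1)}
  have hP := card_le_card (inter_subset_right (s₁ := L i) (s₂ := {a i, a (i + 1)}))
  have := card_le_two (a := a i) (b := a (i + 1))
  have hPL : {a i, a (i + 1)} ⊆ L i :=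
    inter_eq_right.1 (eq_of_subset_of_card_le inter_subset_right (by omega))
  refine ⟨hPL (by simp), hPL (by simp), fun h => ?_⟩
  have : #({a i, a (i + 1)} : Finset ℕ) ≤ 1 := by rw [h, pair_eq_singleton, card_singleton]
  omega

lemma residualList_sub_one_ne_add_one (hn : 3 ≤ n) (hL : ∀ i, 4 ≤ #(L i))
    {S : Finset ℕ} (hS : #S = 2) (ha : ∀ i, residualList L a i = S)
    (hb : ∀ i, i ≠ t → i ≠ t + 1 → b i = a i)
    (hba : b t ≠ a t ∨ b (t + 1) ≠ a (t + 1)) :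
    residualList L b (t - 1) ≠ residualList L b (t + 1) := by
  have h1 : (1 : ZMod n) ≠ 0 := by exact_mod_cast ZMod.natCast_ne_zero_of_lt one_pos (by omega)
  have h2 : (2 : ZMod n) ≠ 0 := by exact_mod_cast ZMod.natCast_ne_zero_of_lt two_pos (by omega)
  have hfacts := fun i => mem_and_ne_of_card_residualList_le (hL i) ((ha i).symm ▸ hS.le)
  have hprev : b (t - 1) = a (t - 1) :=
    hb _ (fun h => h1 (by linear_combination -h)) (fun h => h2 (by linear_combination -h))
  have hnext : b (t + 1 + 1) = a (t + 1 + 1) :=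
    hb _ (fun h => h2 (by linear_combination h)) (fun h => h1 (by linear_combination h))
  have hconst : ∀ i y, y ∈ residualList L a i ↔ y ∈ residualList L a t := fun i y => by
    rw [ha, ha]
  -- The old colour at `t` (or else at `t + 1`) is left at `t - 1` but not at `t + 1`.
  intro heq
  by_cases hbt : b t = a t
  · have hbt1 := hba.resolve_left (not_not.2 hbt)
    have hmem : a (t + 1) ∈ residualList L b (t - 1) := by
      rw [heq, mem_residualList, hnext]
      exact ⟨(hfacts (t + 1)).1, Ne.symm hbt1, (hfacts (t + 1)).2.2⟩
    have : a (t + 1) ∈ residualList L a (t - 1) := by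
      simpa [mem_residualList, hprev, hbt] using hmem
    exact (mem_residualList.1 ((hconst _ _).1 this)).2.2 rfl
  · have hmem : a t ∈ residualList L b (t - 1) := by
      rw [mem_residualList, hprev, sub_add_cancel]
      have := hfacts (t - 1)
      rw [sub_add_cancel] at this
      exact ⟨this.2.1, Ne.symm this.2.2, Ne.symm hbt⟩
    rw [heq, mem_residualList, hnext] at hmem
    have : a t ∈ residualList L a (t + 1) :=
      mem_residualList.2 ⟨hmem.1, (hfacts t).2.2, hmem.2.2⟩
    exact (mem_residualList.1 ((hconst _ _).1 this)).2.1 rfl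

end Residual

namespace SimpleGraph

variable {V : Type*} {T : SimpleGraph V} {n : ℕ} {σ : ZMod n → V} {a b : V}

lemma one_lt_ncard_preimage_branch [Finite V] (hT : T.IsAcyclic) (hσ : Function.Injective σ)
    (hleaves : Set.range σ = {v | (T.neighborSet v).ncard = 1}) (hab : T.Adj a b)
    (ha : 3 ≤ (T.neighborSet a).ncard) : 1 < (σ ⁻¹' T.branch a b).ncard := by
  obtain ⟨x, y, hxy, hx, hy, hxl, hyl⟩ := exists_ne_leaves_mem_branch hT hab ha
  obtain ⟨i, rfl⟩ : x ∈ Set.range σ := hleaves ▸ hxl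
  obtain ⟨j, rfl⟩ : y ∈ Set.range σ := hleaves ▸ hyl
  exact (Set.one_lt_ncard_iff ((Set.toFinite _).preimage hσ.injOn)).2
    ⟨i, j, hx, hy, fun h => hxy (congrArg σ h)⟩

lemma exists_adj_one_lt_ncard_preimage_branch [Finite V] (hT : T.IsTree) (hn : 3 ≤ n)
    (hσ : Function.Injective σ) (hleaf : ∀ i, (T.neighborSet (σ i)).ncard = 1) :
    ∃ a b, T.Adj a b ∧ 1 < (σ ⁻¹' T.branch a b).ncard := by
  obtain ⟨q, hq⟩ := Set.ncard_eq_one.1 (hleaf 0)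
  have h1 : (1 : ZMod n) ≠ 0 := by exact_mod_cast ZMod.natCast_ne_zero_of_lt one_pos (by omega)
  have h2 : (2 : ZMod n) ≠ 0 := by exact_mod_cast ZMod.natCast_ne_zero_of_lt two_pos (by omega)
  have hmem : ∀ i : ZMod n, i ≠ 0 → i ∈ σ ⁻¹' T.branch q (σ 0) := fun i hi =>
    mem_branch_of_neighborSet_eq_singleton hT.connected hq (hσ.ne hi)
  refine ⟨q, σ 0, (adj_of_neighborSet_eq_singleton hq).symm,
    (Set.one_lt_ncard_iff ((Set.toFinite _).preimage hσ.injOn)).2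
      ⟨1, -1, hmem 1 h1, hmem (-1) (neg_ne_zero.2 h1), fun h => h2 ?_⟩⟩
  linear_combination h

/-- Take a tree edge `ab` with the fewest vertices on the side of `a` among those with at least
two leaves there: all neighbours of `a` other than `b` are leaves, and the leaves on the side of
`a` form a cyclic interval. -/
theorem exists_adj_adj_add_one [Finite V] (hT : T.IsTree)
    (hdeg : ∀ v, (T.neighborSet v).ncard ≠ 2)
    (hn : 3 ≤ n) (hσ : Function.Injective σ)
    (hleaves : Set.range σ = {v | (T.neighborSet v).ncard = 1})
    (hplanar : ∀ a b, T.Adj a b → CyclicInterval n (σ ⁻¹' T.branch a b)) :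
    ∃ p t, T.Adj p (σ t) ∧ T.Adj p (σ (t + 1)) := by
  have hleaf : ∀ i, (T.neighborSet (σ i)).ncard = 1 := fun i =>
    (Set.ext_iff.1 hleaves (σ i)).1 ⟨i, rfl⟩
  obtain ⟨⟨a, b⟩, ⟨hab, hJ⟩, hmin⟩ := exists_minimalFor_of_wellFoundedLT
    (fun e : V × V => T.Adj e.1 e.2 ∧ 1 < (σ ⁻¹' T.branch e.1 e.2).ncard)
    (fun e => (T.branch e.1 e.2).ncard)
    (by simpa using exists_adj_one_lt_ncard_preimage_branch hT hn hσ hleaf)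
  have hnb : ∀ c, T.Adj a c → c ≠ b → T.neighborSet c = {a} := by
    intro c hac hcb
    refine neighborSet_eq_singleton_of_ncard_eq_one (by_contra fun hc => ?_) hac.symm
    have hsub := branch_subset_branch hT.isAcyclic hab.symm hac hcb
    have hlt : (T.branch c a).ncard < (T.branch a b).ncard := Set.ncard_lt_ncard
      (hsub.ssubset_of_not_superset fun h =>
        not_mem_branch hT.isAcyclic hac.symm (h mem_branch_self))
      (Set.toFinite _)
    have := hmin (j := (c, a)) ⟨hac.symm, one_lt_ncard_preimage_branch hT.isAcyclic hσ hleaves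
      hac.symm (three_le_ncard_neighborSet hdeg hac.symm hc)⟩ hlt.le
    exact absurd this (not_le.2 hlt)
  have hadj : ∀ i ∈ σ ⁻¹' T.branch a b, T.Adj a (σ i) := by
    intro i hi
    by_cases hia : σ i = a
    · obtain ⟨j, k, hj, hk, hjk⟩ :=
        (Set.one_lt_ncard_iff ((Set.toFinite _).preimage hσ.injOn)).1 hJ
      rw [Set.mem_preimage, ← hia, branch_eq_singleton hT.isAcyclic
        (neighborSet_eq_singleton_of_ncard_eq_one (hleaf i) (hia ▸ hab))] at hj hk
      exact absurd (hσ (hj.trans hk.symm)) hjk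
    obtain ⟨c, hac, hcb, hic⟩ := exists_adj_mem_branch hT.isAcyclic hab hi hia
    rw [branch_eq_singleton hT.isAcyclic (hnb c hac hcb), Set.mem_singleton_iff] at hic
    exact hic ▸ hac
  obtain ⟨t, ht, ht1⟩ := (hplanar a b hab).exists_add_one_mem hJ
  exact ⟨a, t, hadj t ht, hadj (t + 1) ht1⟩

variable {G : SimpleGraph V} {par : ZMod n → V} {L : Sym2 V → Finset ℕ}

lemma ncard_neighborSet_le_degree (hle : T ≤ G) (x : V) [Fintype (G.neighborSet x)] :
    (T.neighborSet x).ncard ≤ G.degree x := by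
  calc (T.neighborSet x).ncard ≤ (G.neighborSet x).ncard :=
        Set.ncard_le_ncard (fun w hw => hle hw) (Set.toFinite _)
    _ = G.degree x := by
      rw [Set.ncard_eq_toFinset_card', Set.toFinset_card, card_neighborSet_eq_degree]

def cycleEdge (σ : ZMod n → V) (i : ZMod n) : Sym2 V := s(σ i, σ (i + 1))

section CycleEdges

variable (hcycle : ∀ u v, (G.Adj u v ∧ ¬T.Adj u v) ↔
  ∃ i, (u = σ i ∧ v = σ (i + 1)) ∨ (v = σ i ∧ u = σ (i + 1)))
include hcycle

lemma cycleEdge_mem_edgeSet (i : ZMod n) :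
    cycleEdge σ i ∈ G.edgeSet ∧ cycleEdge σ i ∉ T.edgeSet :=
  (hcycle _ _).2 ⟨i, .inl ⟨rfl, rfl⟩⟩

lemma mem_edgeSet_or_exists_eq_cycleEdge {e : Sym2 V} (he : e ∈ G.edgeSet) :
    e ∈ T.edgeSet ∨ ∃ i, e = cycleEdge σ i := by
  induction e using Sym2.ind with | _ u v =>
  refine or_iff_not_imp_left.2 fun hT => ?_
  obtain ⟨i, ⟨rfl, rfl⟩ | ⟨rfl, rfl⟩⟩ := (hcycle u v).1 ⟨he, hT⟩
  · exact ⟨i, rfl⟩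
  · exact ⟨i, Sym2.eq_swap⟩

end CycleEdges

lemma cycleEdge_injective (hσ : Function.Injective σ) (h2 : (2 : ZMod n) ≠ 0) :
    Function.Injective (cycleEdge σ) := by
  intro i j h
  rcases Sym2.eq_iff.1 h with ⟨h, -⟩ | ⟨h, h'⟩
  · exact hσ h
  · exact absurd (by linear_combination hσ h' - hσ h) h2

lemma eq_add_one_or_eq_add_one_of_mem_cycleEdge (hσ : Function.Injective σ) {i j : ZMod n}
    (hij : i ≠ j) {v : V} (hvi : v ∈ cycleEdge σ i) (hvj : v ∈ cycleEdge σ j) :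
    j = i + 1 ∨ i = j + 1 := by
  rcases Sym2.mem_iff.1 hvi with rfl | rfl <;> rcases Sym2.mem_iff.1 hvj with h | h
  · exact absurd (hσ h) hij
  · exact .inr (hσ h)
  · exact .inl (hσ h).symm
  · exact absurd (add_right_cancel (hσ h)) hij

theorem exists_isListEdgeColoring_of_cyclicListColorable (hn : 3 ≤ n)
    (hσ : Function.Injective σ)
    (hcycle : ∀ u v, (G.Adj u v ∧ ¬T.Adj u v) ↔
      ∃ i, (u = σ i ∧ v = σ (i + 1)) ∨ (v = σ i ∧ u = σ (i + 1)))
    (hpar : ∀ i, T.neighborSet (σ i) = {par i}) {cT : Sym2 V → ℕ}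
    (hcT : IsListEdgeColoring T L cT)
    (hR : CyclicListColorable (residualList (L ∘ cycleEdge σ) fun i => cT s(σ i, par i))) :
    ∃ C, IsListEdgeColoring G L C := by
  obtain ⟨f, hf, hf'⟩ := hR
  have hinj := cycleEdge_injective hσ
    (by exact_mod_cast ZMod.natCast_ne_zero_of_lt two_pos (by omega))
  set C := Function.extend (cycleEdge σ) f cT
  have hCcyc : ∀ i, C (cycleEdge σ i) = f i := hinj.extend_apply f cT
  have hCT : ∀ e ∈ T.edgeSet, C e = cT e := fun e he => Function.extend_apply' _ _ _
    (by rintro ⟨i, rfl⟩; exact (cycleEdge_mem_edgeSet hcycle i).2 he)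
  have hmix : ∀ e ∈ T.edgeSet, ∀ j, (∃ v, v ∈ e ∧ v ∈ cycleEdge σ j) →
      cT e ≠ f j := by
    rintro e he j ⟨v, hve, hvj⟩
    obtain ⟨-, hj0, hj1⟩ := mem_residualList.1 (hf j)
    rcases Sym2.mem_iff.1 hvj with rfl | rfl
    · rw [eq_of_mem_edgeSet_of_neighborSet_eq_singleton (hpar j) he hve]; exact hj0.symm
    · rw [eq_of_mem_edgeSet_of_neighborSet_eq_singleton (hpar (j + 1)) he hve]; exact hj1.symm
  refine ⟨C, fun e he => ?_, fun e he e' he' hne hshare => ?_⟩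
  · rcases mem_edgeSet_or_exists_eq_cycleEdge hcycle he with hT | ⟨i, rfl⟩
    · rw [hCT e hT]; exact hcT.1 e hT
    · rw [hCcyc]; exact (mem_residualList.1 (hf i)).1
  rcases mem_edgeSet_or_exists_eq_cycleEdge hcycle he with hT | ⟨i, rfl⟩ <;>
    rcases mem_edgeSet_or_exists_eq_cycleEdge hcycle he' with hT' | ⟨j, rfl⟩
  · rw [hCT e hT, hCT e' hT']; exact hcT.2 e hT e' hT' hne hshare
  · rw [hCT e hT, hCcyc]; exact hmix e hT j hshare
  · rw [hCcyc, hCT e' hT']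
    obtain ⟨v, hvi, hve⟩ := hshare
    exact (hmix e' hT' i ⟨v, hve, hvi⟩).symm
  · rw [hCcyc, hCcyc]
    obtain ⟨v, hvi, hvj⟩ := hshare
    rcases eq_add_one_or_eq_add_one_of_mem_cycleEdge hσ (fun h => hne (congrArg _ h)) hvi hvj
      with rfl | rfl
    · exact hf' i
    · exact (hf' j).symm

theorem exists_isListEdgeColoring_cyclicListColorable [Finite V] (hT : T.IsAcyclic) (hn : 3 ≤ n)
    (hσ : Function.Injective σ) (hpar : ∀ i, T.neighborSet (σ i) = {par i})
    (hLT : ∀ u v, T.Adj u v → (T.neighborSet u).ncard ≤ #(L s(u, v)))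
    {Lc : ZMod n → Finset ℕ} (hLc : ∀ i, 4 ≤ #(Lc i)) {p : V} {t : ZMod n}
    (hpt : T.Adj p (σ t)) (hpt1 : T.Adj p (σ (t + 1))) :
    ∃ cT, IsListEdgeColoring T L cT ∧
      CyclicListColorable (residualList Lc fun i => cT s(σ i, par i)) := by
  classical
  obtain ⟨c0, hc0⟩ := hT.exists_isListEdgeColoring L hLT
  by_cases h0 : CyclicListColorable (residualList Lc fun i => c0 s(σ i, par i))
  · exact ⟨c0, hc0, h0⟩
  have hR := fun (c : Sym2 V → ℕ) i =>
    one_lt_card_residualList (a := fun i => c s(σ i, par i)) (hLc i)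
  obtain ⟨S, hS, hSeq⟩ := exists_forall_eq_of_not_cyclicListColorable (by omega) (hR c0) h0
  have h1 : (1 : ZMod n) ≠ 0 := by exact_mod_cast ZMod.natCast_ne_zero_of_lt one_pos (by omega)
  have hst : σ t ≠ σ (t + 1) := hσ.ne fun h => h1 (by linear_combination -h)
  have hpar_t : par t = p := (eq_of_neighborSet_eq_singleton (hpar t) hpt.symm).symm
  have hpar_t1 : par (t + 1) = p := (eq_of_neighborSet_eq_singleton (hpar (t + 1)) hpt1.symm).symm
  have hσp : ∀ i, σ i ≠ p := fun i h => hst <|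
    (eq_of_neighborSet_eq_singleton (hpar i) (h ▸ hpt)).trans
      (eq_of_neighborSet_eq_singleton (hpar i) (h ▸ hpt1)).symm
  obtain ⟨c, hc, hagree, hdiff⟩ := hc0.exists_ne_of_twin_pendants (by rw [hpar, hpar_t])
    (by rw [hpar, hpar_t1]) hst (hLT p _ hpt) (hLT p _ hpt1)
  refine ⟨c, hc, by_contra fun h => ?_⟩
  obtain ⟨S', -, hS'⟩ := exists_forall_eq_of_not_cyclicListColorable (by omega) (hR c) h
  refine residualList_sub_one_ne_add_one (t := t) hn hLc hS hSeq (fun i hit hit1 => ?_) ?_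
    ((hS' _).trans (hS' _).symm)
  · refine hagree _ (adj_of_neighborSet_eq_singleton (hpar i)) ?_ ?_ <;>
      simp [hσp i, hσ.ne hit, hσ.ne hit1]
  · simpa [hpar_t, hpar_t1, Sym2.eq_swap] using hdiff

end SimpleGraph

theorem halin_list_edge_coloring_max_deg_four {V : Type*} [Fintype V] (G : SimpleGraph V)
    [DecidableRel G.Adj] (hG : IsHalin G)
    (L : Sym2 V → Finset ℕ)
    (hL : ∀ v w : V, G.Adj v w → max (max (G.degree v) (G.degree w)) 4 ≤ (L s(v, w)).card) :
    ∃ C, IsListEdgeColoring G L C := by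
  obtain ⟨T, n, σ, hT, hTG, hdeg, hn, hσ, hleaves, hcycle, hplanar⟩ := hG
  choose par hpar using fun i => Set.ncard_eq_one.1 ((Set.ext_iff.1 hleaves (σ i)).1 ⟨i, rfl⟩)
  have hLT : ∀ u v, T.Adj u v → (T.neighborSet u).ncard ≤ #(L s(u, v)) := fun u v huv =>
    (ncard_neighborSet_le_degree hTG u).trans
      ((le_max_left _ _).trans ((le_max_left _ _).trans (hL u v (hTG huv))))
  have hLc : ∀ i, 4 ≤ #((L ∘ cycleEdge σ) i) := fun i =>
    (le_max_right _ _).trans (hL _ _ (cycleEdge_mem_edgeSet hcycle i).1)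
  obtain ⟨p, t, hpt, hpt1⟩ := exists_adj_adj_add_one hT hdeg hn hσ hleaves hplanar
  obtain ⟨cT, hcT, hR⟩ :=
    exists_isListEdgeColoring_cyclicListColorable hT.isAcyclic hn hσ hpar hLT hLc hpt hpt1
  exact exists_isListEdgeColoring_of_cyclicListColorable hn hσ hcycle hpar hcT hR
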